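/- arXiv:1401.6385 — 3 statements merged into one kernel-verified Lean document; each statement's English description precedes it below -/
import Mathlib

section
/- Let T : ℕ → ℝ be a nonnegative function with T(0) = T(1) = T(2) = 1 satisfying T(m) ≤ T(m-3) + T(m-1) for all m ≥ 3. Then T(m) ≤ 1.466^m for all m. -/
/-! A solution of `T m ≤ T (m - 3) + T (m - 1)` grows at most like `c ^ m` as soon as `c` satisfies
the characteristic inequality `1 + c ^ 2 ≤ c ^ 3` and the bound holds on the three initial values;
`1.466` is such a `c`, since the positive root of `t ^ 3 = t ^ 2 + 1` is about `1.4656`. -/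

lemma pow_add_pow_two_le_pow_three {c : ℝ} (hc : 1 + c ^ 2 ≤ c ^ 3) (k : ℕ) :
    c ^ k + c ^ (k + 2) ≤ c ^ (k + 3) := by
  have hc0 : 0 ≤ c := by
    by_contra! hneg
    nlinarith [pow_two_nonneg c, mul_nonneg (pow_two_nonneg c) (neg_nonneg.mpr hneg.le)]
  calc c ^ k + c ^ (k + 2) = c ^ k * (1 + c ^ 2) := by ring
    _ ≤ c ^ k * c ^ 3 := by gcongr
    _ = c ^ (k + 3) := by ring

theorem le_pow_of_le_sub_three_add_sub_one {T : ℕ → ℝ} {c : ℝ} (hc : 1 + c ^ 2 ≤ c ^ 3)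
    (hbase : ∀ m < 3, T m ≤ c ^ m) (hrec : ∀ m, 3 ≤ m → T m ≤ T (m - 3) + T (m - 1)) :
    ∀ m, T m ≤ c ^ m := by
  intro m
  induction m using Nat.strong_induction_on with
  | _ m ih =>
    match m with
    | 0 | 1 | 2 => exact hbase _ (by norm_num)
    | k + 3 =>
      calc T (k + 3) ≤ T k + T (k + 2) := hrec (k + 3) (by omega)
        _ ≤ c ^ k + c ^ (k + 2) := add_le_add (ih k (by omega)) (ih (k + 2) (by omega))
        _ ≤ c ^ (k + 3) := pow_add_pow_two_le_pow_three hc k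

theorem stmt_0_general (T : ℕ → ℝ)
    (h0 : T 0 = 1) (h1 : T 1 = 1) (h2 : T 2 = 1)
    (hrec : ∀ m, 3 ≤ m → T m ≤ T (m - 3) + T (m - 1)) :
    ∀ m, T m ≤ (1.466 : ℝ) ^ m := by
  refine le_pow_of_le_sub_three_add_sub_one (by norm_num) (fun m hm => ?_) hrec
  interval_cases m <;> norm_num [h0, h1, h2]

theorem stmt_0 (T : ℕ → ℝ) (hnn : ∀ m, 0 ≤ T m)
    (h0 : T 0 = 1) (h1 : T 1 = 1) (h2 : T 2 = 1)
    (hrec : ∀ m, 3 ≤ m → T m ≤ T (m - 3) + T (m - 1)) :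
    ∀ m, T m ≤ (1.466 : ℝ) ^ m :=
  stmt_0_general T h0 h1 h2 hrec
end

section
/- Let T : ℕ → ℝ be a nonnegative monotone function with T(m) = 1 for m ≤ 4, satisfying T(m) ≤ T(m-4) + T(m-5) + T(m-3) for all m ≥ 5. Then T(m) ≤ 1.325^m for all m. -/
/-!
The recurrence `T m ≤ T (m - 3) + T (m - 4) + T (m - 5)` is dominated by `c ^ m` as soon as
`c ^ m` satisfies it, i.e. as soon as `1 + c + c ^ 2 ≤ c ^ 5`; since
`x ^ 5 - x ^ 2 - x - 1 = (x ^ 2 + 1) (x ^ 3 - x - 1)`, the optimal `c` is the plastic number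
`≈ 1.3247`, just below `1.325`.
-/

theorem le_pow_of_recurrence_le {T : ℕ → ℝ} {c : ℝ} (hc : 0 ≤ c) (hchar : 1 + c + c ^ 2 ≤ c ^ 5)
    (hbase : ∀ m < 5, T m ≤ c ^ m)
    (hrec : ∀ m, 5 ≤ m → T m ≤ T (m - 4) + T (m - 5) + T (m - 3)) :
    ∀ m, T m ≤ c ^ m := by
  intro m
  induction m using Nat.strong_induction_on with
  | _ m ih =>
    obtain hm | hm := lt_or_ge m 5
    · exact hbase m hm
    obtain ⟨n, rfl⟩ : ∃ n, m = n + 5 := ⟨m - 5, by omega⟩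
    have h4 := ih (n + 1) (by omega)
    have h5 := ih n (by omega)
    have h3 := ih (n + 2) (by omega)
    have hpow : c ^ (n + 1) + c ^ n + c ^ (n + 2) ≤ c ^ (n + 5) := by
      calc c ^ (n + 1) + c ^ n + c ^ (n + 2) = c ^ n * (1 + c + c ^ 2) := by ring
        _ ≤ c ^ n * c ^ 5 := by gcongr
        _ = c ^ (n + 5) := by ring
    have hr := hrec (n + 5) (by omega)
    rw [show n + 5 - 4 = n + 1 by omega, show n + 5 - 5 = n by omega,
      show n + 5 - 3 = n + 2 by omega] at hr
    linarith

theorem stmt_5_general (T : ℕ → ℝ)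
    (hbase : ∀ m, m ≤ 4 → T m = 1)
    (hrec : ∀ m, 5 ≤ m → T m ≤ T (m - 4) + T (m - 5) + T (m - 3)) :
    ∀ m, T m ≤ (1.325 : ℝ) ^ m := by
  refine le_pow_of_recurrence_le (by norm_num) (by norm_num) (fun m hm => ?_) hrec
  rw [hbase m (by omega)]
  exact one_le_pow₀ (by norm_num)

theorem stmt_5 (T : ℕ → ℝ) (hnn : ∀ m, 0 ≤ T m) (hmono : Monotone T)
    (hbase : ∀ m, m ≤ 4 → T m = 1)
    (hrec : ∀ m, 5 ≤ m → T m ≤ T (m - 4) + T (m - 5) + T (m - 3)) :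
    ∀ m, T m ≤ (1.325 : ℝ) ^ m :=
  stmt_5_general T hbase hrec
end

section
/- Let X be a finite set, F a finite family of subsets of X, and w : F → ℝ≥0. Suppose F = F₁ ∪ F₂ with F₁ ∩ F₂ = ∅ and (⋃ F₁) ∩ (⋃ F₂) = ∅. If F₁' is an optimal solution (maximum coverage, then minimum weight, among mutually exclusive sub-families) of the instance restricted to F₁, and F₂' is an optimal solution of the instance restricted to F₂, then F₁' ∪ F₂' is an optimal solution of the instance (X, F, w). -/
/-- `F'` is an optimal solution of the weighted mutually exclusive maximum set cover
instance given by the family `F` and weight `w`. -/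
def IsOptimal {α : Type*} [DecidableEq α] (w : Finset α → NNReal)
    (F F' : Finset (Finset α)) : Prop :=
  F' ⊆ F ∧ (∀ S ∈ F', ∀ T ∈ F', S ≠ T → Disjoint S T) ∧
    ∀ F'' ⊆ F, (∀ S ∈ F'', ∀ T ∈ F'', S ≠ T → Disjoint S T) →
      (F''.biUnion id).card ≤ (F'.biUnion id).card ∧
      ((F''.biUnion id).card = (F'.biUnion id).card →
        ∑ S ∈ F', w S ≤ ∑ S ∈ F'', w S)

/-!
A mutually exclusive subfamily `G ⊆ F₁ ∪ F₂` splits into the disjoint parts `G ∩ F₁ ⊆ F₁` and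
`G \ F₁ ⊆ F₂`. Since `⋃ F₁` and `⋃ F₂` are disjoint, coverage is additive over the split, and so
is weight; comparing each part with `Fᵢ'` gives both optimality conditions for `F₁' ∪ F₂'`.
On the optimum side weight is only subadditive (`F₁'` and `F₂'` may share `∅`), which suffices.
-/

open Finset

section

variable {α ι : Type*}

def MutuallyExclusive (G : Finset (Finset α)) : Prop :=
  ∀ S ∈ G, ∀ T ∈ G, S ≠ T → Disjoint S T

lemma MutuallyExclusive.mono {G G' : Finset (Finset α)} (hG : MutuallyExclusive G)
    (h : G' ⊆ G) : MutuallyExclusive G' :=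
  fun S hS T hT => hG S (h hS) T (h hT)

lemma MutuallyExclusive.union [DecidableEq α] {G₁ G₂ : Finset (Finset α)}
    (h₁ : MutuallyExclusive G₁) (h₂ : MutuallyExclusive G₂)
    (h : Disjoint (G₁.biUnion id) (G₂.biUnion id)) :
    MutuallyExclusive (G₁ ∪ G₂) := by
  have across {S T} (hS : S ∈ G₁) (hT : T ∈ G₂) : Disjoint S T :=
    h.mono (subset_biUnion_of_mem id hS) (subset_biUnion_of_mem id hT)
  intro S hS T hT hST
  rcases mem_union.1 hS with hS | hS <;> rcases mem_union.1 hT with hT | hT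
  exacts [h₁ S hS T hT hST, across hS hT, (across hT hS).symm, h₂ S hS T hT hST]

lemma Disjoint.biUnion_mono [DecidableEq ι] {s₁ s₂ t₁ t₂ : Finset α} {f : α → Finset ι}
    (h : Disjoint (s₁.biUnion f) (s₂.biUnion f)) (h₁ : t₁ ⊆ s₁) (h₂ : t₂ ⊆ s₂) :
    Disjoint (t₁.biUnion f) (t₂.biUnion f) :=
  h.mono (biUnion_subset_biUnion_of_subset_left f h₁) (biUnion_subset_biUnion_of_subset_left f h₂)

lemma card_biUnion_union_of_disjoint [DecidableEq α] [DecidableEq ι] {s t : Finset α}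
    {f : α → Finset ι} (h : Disjoint (s.biUnion f) (t.biUnion f)) :
    #((s ∪ t).biUnion f) = #(s.biUnion f) + #(t.biUnion f) := by
  rw [union_biUnion, card_union_of_disjoint h]

lemma sum_union_le_add {M : Type*} [AddCommMonoid M] [PartialOrder M] [CanonicallyOrderedAdd M]
    [DecidableEq ι] (s t : Finset ι) (f : ι → M) :
    ∑ i ∈ s ∪ t, f i ≤ ∑ i ∈ s, f i + ∑ i ∈ t, f i := by
  rw [← sum_union_inter]
  exact le_self_add

end

namespace IsOptimal

variable {α : Type*} [DecidableEq α] {w : Finset α → NNReal} {F F' G : Finset (Finset α)}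

lemma mutuallyExclusive (h : IsOptimal w F F') : MutuallyExclusive F' := h.2.1

lemma card_biUnion_le (h : IsOptimal w F F') (hG : G ⊆ F) (hGme : MutuallyExclusive G) :
    #(G.biUnion id) ≤ #(F'.biUnion id) :=
  (h.2.2 G hG hGme).1

lemma sum_le (h : IsOptimal w F F') (hG : G ⊆ F) (hGme : MutuallyExclusive G)
    (hcard : #(G.biUnion id) = #(F'.biUnion id)) : ∑ S ∈ F', w S ≤ ∑ S ∈ G, w S :=
  (h.2.2 G hG hGme).2 hcard

end IsOptimal

theorem stmt_11_general {α : Type*} [DecidableEq α] (w : Finset α → NNReal)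
    (F₁ F₂ F₁' F₂' : Finset (Finset α))
    (hcov : Disjoint (F₁.biUnion id) (F₂.biUnion id))
    (h1 : IsOptimal w F₁ F₁') (h2 : IsOptimal w F₂ F₂') :
    IsOptimal w (F₁ ∪ F₂) (F₁' ∪ F₂') := by
  have hcov' := hcov.biUnion_mono h1.1 h2.1
  refine ⟨union_subset_union h1.1 h2.1, h1.mutuallyExclusive.union h2.mutuallyExclusive hcov',
    fun G hG (hGme : MutuallyExclusive G) => ?_⟩
  have hG₁ : G ∩ F₁ ⊆ F₁ := inter_subset_right
  have hG₂ : G \ F₁ ⊆ F₂ := sdiff_le_iff.2 hG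
  have hme₁ : MutuallyExclusive (G ∩ F₁) := hGme.mono inter_subset_left
  have hme₂ : MutuallyExclusive (G \ F₁) := hGme.mono sdiff_subset
  have hc₁ := h1.card_biUnion_le hG₁ hme₁
  have hc₂ := h2.card_biUnion_le hG₂ hme₂
  have hsplit : G ∩ F₁ ∪ G \ F₁ = G := sup_inf_sdiff G F₁
  rw [← hsplit, card_biUnion_union_of_disjoint (hcov.biUnion_mono hG₁ hG₂),
    card_biUnion_union_of_disjoint hcov']
  refine ⟨add_le_add hc₁ hc₂, fun hcard => ?_⟩
  calc ∑ S ∈ F₁' ∪ F₂', w S ≤ ∑ S ∈ F₁', w S + ∑ S ∈ F₂', w S := sum_union_le_add _ _ _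
    _ ≤ ∑ S ∈ G ∩ F₁, w S + ∑ S ∈ G \ F₁, w S :=
      add_le_add (h1.sum_le hG₁ hme₁ (by omega)) (h2.sum_le hG₂ hme₂ (by omega))
    _ = ∑ S ∈ G ∩ F₁ ∪ G \ F₁, w S := (sum_union disjoint_inf_sdiff).symm

theorem stmt_11 {α : Type*} [DecidableEq α] (w : Finset α → NNReal)
    (F₁ F₂ F₁' F₂' : Finset (Finset α))
    (hdisj : Disjoint F₁ F₂)
    (hcov : Disjoint (F₁.biUnion id) (F₂.biUnion id))
    (h1 : IsOptimal w F₁ F₁') (h2 : IsOptimal w F₂ F₂') :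
    IsOptimal w (F₁ ∪ F₂) (F₁' ∪ F₂') :=
  stmt_11_general w F₁ F₂ F₁' F₂' hcov h1 h2
end
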